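/- arXiv:1810.01058 — 4 statements merged into one kernel-verified Lean document; each statement's English description precedes it below -/
import Mathlib

section
/- Let α, β ∈ ℂ with αβ ≠ 0, αβ ≠ 1, and β ≠ −conj(α), and let (a_n) be a complex sequence with a_n → 0 satisfying, for every n ≥ 1, a_{2n+1} + (α+conj(β))a_{2n} + α·conj(β)·a_{2n−1} = 0 and conj(α)·β·a_{2n+1} + (conj(α)+β)a_{2n} + a_{2n−1} = 0. If moreover |α| ≠ 1 or |β| ≠ 1, then a_n = 0 for all n ≥ 1. -/
/-!
Write `D = 1 - |αβ|²`. Eliminating `a_{2n+1}`, resp. `a_{2n-1}`, from the two recursions gives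
`D a_{2n+1} = Q a_{2n}` and `D a_{2n-1} = conj Q a_{2n}` for an explicit `Q`, so `|a_{2n+1}| = |a_{2n-1}|`
when `D ≠ 0`. When `D = 0`, the hypotheses `αβ ≠ 1` and `|α| ≠ 1 ∨ |β| ≠ 1` force `Q ≠ 0`, hence
`a_{2n} = 0` and `a_{2n+1} = -α conj β · a_{2n-1}` with `|α conj β| = 1`. Either way the odd terms have
constant modulus, so they vanish since `a_n → 0`; the first recursion then reads
`(α + conj β) a_{2n} = 0`, and `β ≠ -conj α` kills the even terms.
-/

open Filter ComplexConjugate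

theorem eq_zero_of_tendsto_zero_of_norm_succ_eq {E : Type*} [NormedAddGroup E] {c : ℕ → E}
    (hnorm : ∀ n, ‖c (n + 1)‖ = ‖c n‖) (hlim : Tendsto c atTop (nhds 0)) (n : ℕ) : c n = 0 := by
  have hconst : ∀ n, ‖c n‖ = ‖c 0‖ := fun n => by
    induction n with
    | zero => rfl
    | succ n ih => rw [hnorm, ih]
  have h0 : ‖c 0‖ = ‖(0 : E)‖ := by
    refine tendsto_const_nhds_iff (l := (atTop : Filter ℕ)).1 ?_
    simpa only [hconst] using hlim.norm
  rw [← norm_eq_zero, hconst, h0, norm_zero]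

lemma Complex.norm_eq_one_of_mul_conj_eq_one {z : ℂ} (h : z * conj z = 1) : ‖z‖ = 1 := by
  rw [Complex.mul_conj'] at h
  exact (pow_eq_one_iff_of_nonneg (norm_nonneg z) two_ne_zero).1 (by exact_mod_cast h)

/-- `u, v, w` stand for `a_{2n-1}, a_{2n}, a_{2n+1}`. -/
lemma norm_eq_of_recurrence_pair {α β u v w : ℂ} (h1 : α * β ≠ 1) (hmod : ‖α‖ ≠ 1 ∨ ‖β‖ ≠ 1)
    (e1 : w + (α + conj β) * v + α * conj β * u = 0)
    (e2 : conj α * β * w + (conj α + β) * v + u = 0) : ‖w‖ = ‖u‖ := by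
  set D : ℂ := 1 - α * conj β * (conj α * β)
  set Q : ℂ := α * (β * conj β - 1) + conj β * (α * conj α - 1)
  have hw : D * w = Q * v := by linear_combination e1 - α * conj β * e2
  have hu : D * u = conj Q * v := by
    simp only [Q, map_add, map_mul, map_sub, map_one, Complex.conj_conj]
    linear_combination e2 - conj α * β * e1
  by_cases hD : D = 0
  · have hprod : α * conj β * (conj α * β) = 1 := by linear_combination -hD
    have hQ : conj Q ≠ 0 := by
      intro hQ0
      simp only [Q, map_add, map_mul, map_sub, map_one, Complex.conj_conj] at hQ0
      have hfac : (α * conj α - 1) * (α * β - 1) = 0 := by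
        linear_combination α * hQ0 - hprod
      rcases mul_eq_zero.1 hfac with hα | hαβ
      · have hα1 : α * conj α = 1 := by linear_combination hα
        have hβ1 : β * conj β = 1 := by linear_combination hprod - β * conj β * hα
        exact hmod.elim (· (Complex.norm_eq_one_of_mul_conj_eq_one hα1))
          (· (Complex.norm_eq_one_of_mul_conj_eq_one hβ1))
      · exact h1 (by linear_combination hαβ)
    have hv : v = 0 := by
      rw [hD, zero_mul] at hu
      exact (mul_eq_zero.1 hu.symm).resolve_left hQ
    have hw' : w = -(α * conj β) * u := by linear_combination e1 - (α + conj β) * hv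
    have hconj : α * conj β * conj (α * conj β) = 1 := by
      rwa [map_mul, Complex.conj_conj]
    rw [hw', norm_mul, norm_neg, Complex.norm_eq_one_of_mul_conj_eq_one hconj, one_mul]
  · refine mul_left_cancel₀ (norm_ne_zero_iff.2 hD) ?_
    rw [← norm_mul, ← norm_mul, hw, hu, norm_mul, norm_mul, Complex.norm_conj]

theorem stmt3_general (α β : ℂ) (h1 : α * β ≠ 1) (h2 : β ≠ -conj α)
    (a : ℕ → ℂ) (hlim : Tendsto a atTop (nhds 0))
    (hrec1 : ∀ n : ℕ, 1 ≤ n →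
      a (2 * n + 1) + (α + conj β) * a (2 * n) + α * conj β * a (2 * n - 1) = 0)
    (hrec2 : ∀ n : ℕ, 1 ≤ n →
      conj α * β * a (2 * n + 1) + (conj α + β) * a (2 * n) + a (2 * n - 1) = 0)
    (hmod : ‖α‖ ≠ 1 ∨ ‖β‖ ≠ 1) :
    ∀ n : ℕ, 1 ≤ n → a n = 0 := by
  have hodd : ∀ m, a (2 * m + 1) = 0 := by
    refine eq_zero_of_tendsto_zero_of_norm_succ_eq (fun m => ?_)
      (hlim.comp (tendsto_atTop_atTop.2 fun b => ⟨b, fun m hm => by omega⟩))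
    have hidx : 2 * (m + 1) - 1 = 2 * m + 1 := by omega
    have e1 := hrec1 (m + 1) (by omega)
    have e2 := hrec2 (m + 1) (by omega)
    rw [hidx] at e1 e2
    exact norm_eq_of_recurrence_pair h1 hmod e1 e2
  have hsum : α + conj β ≠ 0 := fun h => h2 <| by
    simpa using congrArg conj (eq_neg_of_add_eq_zero_right h)
  intro n hn
  obtain ⟨m, rfl | rfl⟩ := Nat.even_or_odd' n
  · have e1 := hrec1 m (by omega)
    have hidx : 2 * m - 1 = 2 * (m - 1) + 1 := by omega
    rw [hidx, hodd, hodd, mul_zero, add_zero, zero_add, mul_eq_zero] at e1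
    exact e1.resolve_left hsum
  · exact hodd m

/-- contrapositive form of the dichotomy lemma. -/
theorem stmt3 (α β : ℂ) (h0 : α * β ≠ 0) (h1 : α * β ≠ 1) (h2 : β ≠ -conj α)
    (a : ℕ → ℂ) (hlim : Tendsto a atTop (nhds 0))
    (hrec1 : ∀ n : ℕ, 1 ≤ n →
      a (2 * n + 1) + (α + conj β) * a (2 * n) + α * conj β * a (2 * n - 1) = 0)
    (hrec2 : ∀ n : ℕ, 1 ≤ n →
      conj α * β * a (2 * n + 1) + (conj α + β) * a (2 * n) + a (2 * n - 1) = 0)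
    (hmod : ‖α‖ ≠ 1 ∨ ‖β‖ ≠ 1) :
    ∀ n : ℕ, 1 ≤ n → a n = 0 :=
  stmt3_general α β h1 h2 a hlim hrec1 hrec2 hmod
end

section
/- Let f, g ∈ H^2 with Taylor coefficients (f_k), (g_k). Then ⟨S^{*2m} f, S^{*2n} g⟩ = 0 in H^2 for all m, n ≥ 0 if and only if f_{2m}·conj(g_{2n}) + f_{2m+1}·conj(g_{2n+1}) = 0 for all m, n ≥ 0. -/
/-!
Write `c m n = ∑' k, f (2m+k) conj (g (2n+k))` and `p m n` for the two-term expression. Peeling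
off the first two terms gives `c m n = p m n + c (m+1) (n+1)`, and grouping the series in
consecutive pairs gives `c m n = ∑' j, p (m+j) (n+j)`; each identity yields one direction.
All series converge because `‖a b‖ ≤ ‖a‖² + ‖b‖²` and `f, g` are square-summable.
-/

open ComplexConjugate

theorem summable_mul_of_summable_norm_sq {ι R : Type*} [NonUnitalSeminormedRing R]
    [CompleteSpace R]
    {f g : ι → R} (hf : Summable fun i => ‖f i‖ ^ 2) (hg : Summable fun i => ‖g i‖ ^ 2) :
    Summable fun i => f i * g i :=
  (hf.add hg).of_norm_bounded fun i => by
    nlinarith [norm_mul_le (f i) (g i), two_mul_le_add_sq ‖f i‖ ‖g i‖, norm_nonneg (f i),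
      norm_nonneg (g i)]

theorem summable_shift_mul_conj_shift {f g : ℕ → ℂ} (hf : Summable fun k => ‖f k‖ ^ 2)
    (hg : Summable fun k => ‖g k‖ ^ 2) (a b : ℕ) :
    Summable fun k => f (a + k) * conj (g (b + k)) :=
  summable_mul_of_summable_norm_sq (hf.comp_injective (add_right_injective a))
    (by simpa only [Function.comp_def, Complex.norm_conj] using
      hg.comp_injective (add_right_injective b))

theorem Summable.tsum_eq_add_add_tsum_nat_add_two {G : Type*} [AddCommGroup G] [TopologicalSpace G]
    [IsTopologicalAddGroup G] [T2Space G] {h : ℕ → G} (hs : Summable h) :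
    ∑' k, h k = h 0 + h 1 + ∑' k, h (k + 2) := by
  simp [← hs.sum_add_tsum_nat_add 2, Finset.sum_range_succ]

theorem Summable.tsum_eq_tsum_even_add_odd {G : Type*} [AddCommGroup G] [UniformSpace G]
    [IsUniformAddGroup G] [CompleteSpace G] [T2Space G] {h : ℕ → G} (hs : Summable h) :
    ∑' k, h k = ∑' j, (h (2 * j) + h (2 * j + 1)) := by
  have he : Summable fun j => h (2 * j) := hs.comp_injective (mul_right_injective₀ two_ne_zero)
  have ho : Summable fun j => h (2 * j + 1) :=
    hs.comp_injective ((add_left_injective 1).comp (mul_right_injective₀ two_ne_zero))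
  rw [he.tsum_add ho, tsum_even_add_odd he ho]

/-- for `f, g ∈ H²` (with coefficient sequences `(f k)`, `(g k)`),
`⟨S*^{2m} f, S*^{2n} g⟩ = ∑_k f_{2m+k} conj (g_{2n+k})` vanishes for all `m, n ≥ 0`
iff `f_{2m} conj (g_{2n}) + f_{2m+1} conj (g_{2n+1}) = 0` for all `m, n ≥ 0`. -/
theorem stmt5 (f g : ℕ → ℂ)
    (hf : Summable fun k => ‖f k‖ ^ 2) (hg : Summable fun k => ‖g k‖ ^ 2) :
    (∀ m n : ℕ, ∑' k : ℕ, f (2 * m + k) * conj (g (2 * n + k)) = 0) ↔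
      (∀ m n : ℕ,
        f (2 * m) * conj (g (2 * n)) + f (2 * m + 1) * conj (g (2 * n + 1)) = 0) := by
  have hsum := summable_shift_mul_conj_shift hf hg
  constructor
  · intro H m n
    have hsplit := (hsum (2 * m) (2 * n)).tsum_eq_add_add_tsum_nat_add_two
    have htail : ∑' k, f (2 * m + (k + 2)) * conj (g (2 * n + (k + 2))) = 0 := by
      simpa only [mul_add, mul_one, add_assoc, add_comm 2] using H (m + 1) (n + 1)
    simpa only [H m n, htail, add_zero] using hsplit.symm
  · intro H m n
    rw [(hsum (2 * m) (2 * n)).tsum_eq_tsum_even_add_odd]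
    refine (tsum_congr fun j => ?_).trans tsum_zero
    simpa only [mul_add, add_assoc] using H (m + j) (n + j)
end

section
/- Let H be a Hilbert space and T a bounded operator on H with rank(I − T T*) ≤ 1, say I − T T* = v ⊗ v for a vector v ∈ H. Suppose the closed linear span of {T^n v : n ≥ 0} equals H. Then T has no nontrivial reducing subspace (T is irreducible). -/
/-!
If `M` reduces `T`, it is invariant under `I - T T* = v ⊗ v`, so `⟪v, f⟫ v ∈ M` for every `f ∈ M`:
either `v ∈ M` or `v ⊥ M`. In the first case the closed `T`-invariant subspace `M` contains the
cyclic vector `v`, hence is everything. In the second case the same applies to `Mᗮ`, which is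
`T`-invariant because `M` is `T*`-invariant, so `M = ⊥`.
-/

open Module End Submodule

theorem Submodule.topologicalClosure_span_orbit_le {R E : Type*} [Semiring R] [AddCommMonoid E]
    [Module R E] [TopologicalSpace E] [ContinuousAdd E] [ContinuousConstSMul R E]
    {T : E →L[R] E} {K : Submodule R E} (hK : IsClosed (K : Set E))
    (hTK : K ∈ invtSubmodule T.toLinearMap) {v : E} (hv : v ∈ K) :
    (span R {x | ∃ n : ℕ, x = (T ^ n) v}).topologicalClosure ≤ K := by
  have horbit : ∀ n : ℕ, (T ^ n) v ∈ K := by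
    intro n
    induction n with
    | zero => simpa using hv
    | succ n ih =>
      rw [pow_succ']
      exact hTK ih
  refine topologicalClosure_minimal _ (span_le.mpr ?_) hK
  rintro x ⟨n, rfl⟩
  exact horbit n

theorem Submodule.eq_top_of_mem_of_cyclic {R E : Type*} [Semiring R] [AddCommMonoid E]
    [Module R E] [TopologicalSpace E] [ContinuousAdd E] [ContinuousConstSMul R E]
    {T : E →L[R] E} {v : E}
    (hcyc : (span R {x | ∃ n : ℕ, x = (T ^ n) v}).topologicalClosure = ⊤)
    {K : Submodule R E} (hK : IsClosed (K : Set E)) (hTK : K ∈ invtSubmodule T.toLinearMap)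
    (hv : v ∈ K) : K = ⊤ :=
  top_unique (hcyc ▸ topologicalClosure_span_orbit_le hK hTK hv)

theorem Submodule.mem_or_mem_orthogonal_of_inner_smul_mem {𝕜 E : Type*} [RCLike 𝕜]
    [NormedAddCommGroup E] [InnerProductSpace 𝕜 E] {M : Submodule 𝕜 E} {v : E}
    (h : ∀ f ∈ M, inner 𝕜 v f • v ∈ M) : v ∈ M ∨ v ∈ Mᗮ := by
  rw [or_iff_not_imp_right, mem_orthogonal']
  intro hv
  push Not at hv
  obtain ⟨f, hfM, hf⟩ := hv
  simpa [smul_smul, inv_mul_cancel₀ hf] using M.smul_mem (inner 𝕜 v f)⁻¹ (h f hfM)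

/-- Theorem 3.1, abstract form: if `I − T T* = v ⊗ v` and the
orbit `{Tⁿ v}` spans a dense subspace of `H`, then `T` has no nontrivial
reducing subspace. -/
theorem stmt10 {H : Type*} [NormedAddCommGroup H] [InnerProductSpace ℂ H]
    [CompleteSpace H] (T : H →L[ℂ] H) (v : H)
    (hdef : ∀ f : H, f - T ((ContinuousLinearMap.adjoint T) f) = (inner ℂ v f : ℂ) • v)
    (hcyc : (Submodule.span ℂ {x : H | ∃ n : ℕ, x = (T ^ n) v}).topologicalClosure = ⊤)
    (M : Submodule ℂ H) (hMc : IsClosed (M : Set H))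
    (hT : ∀ f ∈ M, T f ∈ M)
    (hT' : ∀ f ∈ M, (ContinuousLinearMap.adjoint T) f ∈ M) :
    M = ⊥ ∨ M = ⊤ := by
  have hdefect : ∀ f ∈ M, inner ℂ v f • v ∈ M := fun f hf ↦
    hdef f ▸ M.sub_mem hf (hT _ (hT' _ hf))
  rcases mem_or_mem_orthogonal_of_inner_smul_mem hdefect with hv | hv
  · exact Or.inr (eq_top_of_mem_of_cyclic hcyc hMc hT hv)
  · have hMperp : Mᗮ ∈ invtSubmodule T.toLinearMap :=
      ContinuousLinearMap.orthogonal_mem_invtSubmodule hT'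
    exact Or.inl ((orthogonal_eq_top_iff M).mp
      (eq_top_of_mem_of_cyclic hcyc M.isClosed_orthogonal hMperp hv))
end

section
/- Let α, β ∈ ℂ with |α| = |β| = 1 and αβ ≠ 1, and let (b_k) be a square-summable sequence of complex numbers. Suppose for every n ≥ 0: (conj(β)+α)·Σ_{k≥2n+1}|b_k|² − α·|b_{2n+1}|² + c_n + α·conj(β)·conj(c_n) = 0, where c_n = Σ_{k≥0} b_{2n+1+k}·conj(b_{2n+2+k}). Then b_{2n+1} = 0 for every n ≥ 0. -/
open ComplexConjugate

/-! Fix `n` and write `s` for the tail sum, `p = |b_{2n+1}|²` and `c = c_n`. Conjugating the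
relation and comparing it with the relation multiplied by `conj α · β` eliminates `s` and `c`
(using `|α| = |β| = 1`) and leaves `(conj α − β) · p = 0`. Since `conj α = β` would force
`αβ = |α|² = 1`, we get `p = 0`. -/

lemma Complex.mul_conj_eq_one_of_norm_eq_one {z : ℂ} (hz : ‖z‖ = 1) : z * conj z = 1 := by
  rw [Complex.mul_conj', hz]
  norm_num

lemma Complex.conj_sub_ne_zero_of_mul_ne_one {α β : ℂ} (hα : ‖α‖ = 1) (hαβ : α * β ≠ 1) :
    conj α - β ≠ 0 := by
  intro h
  rw [sub_eq_zero] at h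
  exact hαβ (h ▸ Complex.mul_conj_eq_one_of_norm_eq_one hα)

lemma Complex.conj_sub_mul_eq_zero_of_relation {α β c : ℂ} {s p : ℝ}
    (hα : ‖α‖ = 1) (hβ : ‖β‖ = 1)
    (h : (conj β + α) * s - α * p + c + α * conj β * conj c = 0) :
    (conj α - β) * p = 0 := by
  have hconj := congrArg conj h
  simp only [map_add, map_sub, map_mul, map_zero, Complex.conj_conj, Complex.conj_ofReal]
    at hconj
  linear_combination (conj α * β) * h - hconj
    + (β * ((p : ℂ) - s) - conj c * β * conj β) * Complex.mul_conj_eq_one_of_norm_eq_one hα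
    + (-(s : ℂ) * conj α - conj c) * Complex.mul_conj_eq_one_of_norm_eq_one hβ

lemma Complex.ofReal_eq_zero_of_relation {α β c : ℂ} {s p : ℝ}
    (hα : ‖α‖ = 1) (hβ : ‖β‖ = 1) (hαβ : α * β ≠ 1)
    (h : (conj β + α) * s - α * p + c + α * conj β * conj c = 0) :
    p = 0 := by
  have hmul := Complex.conj_sub_mul_eq_zero_of_relation hα hβ h
  exact_mod_cast (mul_eq_zero.mp hmul).resolve_left
    (Complex.conj_sub_ne_zero_of_mul_ne_one hα hαβ)

theorem stmt16_general (α β : ℂ) (hα : ‖α‖ = 1) (hβ : ‖β‖ = 1) (hαβ : α * β ≠ 1)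
    (b : ℕ → ℂ)
    (heq : ∀ n : ℕ,
      (conj β + α) * ((∑' k : ℕ, ‖b (2 * n + 1 + k)‖ ^ 2 : ℝ) : ℂ)
        - α * ((‖b (2 * n + 1)‖ ^ 2 : ℝ) : ℂ)
        + (∑' k : ℕ, b (2 * n + 1 + k) * conj (b (2 * n + 2 + k)))
        + α * conj β * conj (∑' k : ℕ, b (2 * n + 1 + k) * conj (b (2 * n + 2 + k)))
        = 0) :
    ∀ n : ℕ, b (2 * n + 1) = 0 := by
  intro n
  have hsq : ‖b (2 * n + 1)‖ ^ 2 = 0 := Complex.ofReal_eq_zero_of_relation hα hβ hαβ (heq n)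
  simpa using hsq

/-- the key coefficient computation in the main theorem.
If `|α| = |β| = 1`, `αβ ≠ 1`, `(b k)` is square-summable and for every `n ≥ 0`
`(conj β + α)·∑_{k ≥ 2n+1} |b_k|² − α·|b_{2n+1}|² + c_n + α·conj β·conj c_n = 0`,
where `c_n = ∑_k b_{2n+1+k}·conj b_{2n+2+k}`, then `b_{2n+1} = 0` for all `n ≥ 0`. -/
theorem stmt16 (α β : ℂ) (hα : ‖α‖ = 1) (hβ : ‖β‖ = 1) (hαβ : α * β ≠ 1)
    (b : ℕ → ℂ) (hsum : Summable fun k => ‖b k‖ ^ 2)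
    (heq : ∀ n : ℕ,
      (conj β + α) * ((∑' k : ℕ, ‖b (2 * n + 1 + k)‖ ^ 2 : ℝ) : ℂ)
        - α * ((‖b (2 * n + 1)‖ ^ 2 : ℝ) : ℂ)
        + (∑' k : ℕ, b (2 * n + 1 + k) * conj (b (2 * n + 2 + k)))
        + α * conj β * conj (∑' k : ℕ, b (2 * n + 1 + k) * conj (b (2 * n + 2 + k)))
        = 0) :
    ∀ n : ℕ, b (2 * n + 1) = 0 :=
  stmt16_general α β hα hβ hαβ b heq
end
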